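/- For every integer r ≥ 3, the graph G_{2r+1} has 6r + 6 vertices and has no perfect matching. -/

import Mathlib

/-! Deleting the three hubs `x, y, z` leaves `2r + 1` triangles, each of odd size, so a perfect
matching must match some vertex of every triangle to a hub; distinct triangles use distinct hubs,
which is impossible once there are more than three triangles (the easy half of Tutte's
theorem). -/

/-- A matching `M` of `G` is maximum if no matching of `G` has more edges. -/
def SimpleGraph.IsMaximumMatching {α : Type*} (G : SimpleGraph α) (M : G.Subgraph) : Prop :=
  M.IsMatching ∧ ∀ M' : G.Subgraph, M'.IsMatching → M'.edgeSet.ncard ≤ M.edgeSet.ncard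

/-- The (underlying simple) graph `G_n` of the paper (used with `n = 2r + 1`):
the vertices `x, y, z` are encoded as `Sum.inl 0, Sum.inl 1, Sum.inl 2`, the vertex
`v_{k+1}^{(i)}` is encoded as `Sum.inr (k, i)`; `x` is joined to every `v_1^{(i)}`,
`y` to every `v_2^{(i)}`, `z` to every `v_3^{(i)}`, and for each `i` the vertices
`v_1^{(i)}, v_2^{(i)}, v_3^{(i)}` form a triangle. -/
def GGraph (n : ℕ) : SimpleGraph (Fin 3 ⊕ Fin 3 × Fin n) where
  Adj a b :=
    match a, b with
    | .inl k, .inr p => p.1 = k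
    | .inr p, .inl k => p.1 = k
    | .inr p, .inr q => p.2 = q.2 ∧ p.1 ≠ q.1
    | _, _ => False
  symm := by
    constructor
    rintro (k | p) (k' | q) h
    · exact h
    · exact h
    · exact h
    · exact ⟨h.1.symm, h.2.symm⟩
  loopless := by
    constructor
    rintro (k | p) h
    · exact h
    · exact h.2 rfl

open Function

namespace SimpleGraph.Subgraph.IsPerfectMatching

variable {V : Type*} {G : SimpleGraph V} {M : G.Subgraph}

theorem exists_adj_notMem_of_odd_card (hM : M.IsPerfectMatching) {s : Finset V}
    (hs : Odd s.card) : ∃ v ∈ s, ∃ w ∉ s, M.Adj v w := by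
  by_contra! h
  have hmatch : (M.induce s).IsMatching := by
    intro v hv
    obtain ⟨w, hvw, huniq⟩ := hM.1 (hM.2 v)
    have hw : w ∈ s := by
      by_contra hw
      exact h v hv w hw hvw
    exact ⟨w, ⟨hv, hw, hvw⟩, fun w' hw' => huniq w' hw'.2.2⟩
  have : Fintype (M.induce s).verts := inferInstanceAs (Fintype (s : Set V))
  have heven := hmatch.even_card
  simp only [induce_verts, Set.toFinset_card, Finset.coe_sort_coe, Fintype.card_coe] at heven
  exact Nat.not_even_iff_odd.2 hs heven

theorem card_le_card_of_odd_blocks {ι : Type*} [Fintype ι] (hM : M.IsPerfectMatching)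
    (s : ι → Finset V) (hodd : ∀ i, Odd (s i).card) (hdisj : Pairwise (Disjoint on s))
    (u : Finset V) (hout : ∀ i, ∀ v ∈ s i, ∀ w ∉ s i, G.Adj v w → w ∈ u) :
    Fintype.card ι ≤ u.card := by
  have hexit : ∀ i, ∃ w ∈ u, ∃ v ∈ s i, M.Adj w v := fun i => by
    obtain ⟨v, hv, w, hw, hvw⟩ := exists_adj_notMem_of_odd_card hM (hodd i)
    exact ⟨w, hout i v hv w hw (M.adj_sub hvw), v, hv, hvw.symm⟩
  choose f hfu v hv hadj using hexit
  have hinj : Injective fun i => (⟨f i, hfu i⟩ : u) := by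
    intro i j hij
    simp only [Subtype.mk.injEq] at hij
    have hvij : v i = v j := hM.1.eq_of_adj_left (hadj i) (hij ▸ hadj j)
    by_contra hne
    exact Finset.disjoint_left.1 (hdisj hne) (hv i) (hvij ▸ hv j)
  simpa using Fintype.card_le_of_injective _ hinj

end SimpleGraph.Subgraph.IsPerfectMatching

namespace GGraph

def triangle (n : ℕ) (i : Fin n) : Finset (Fin 3 ⊕ Fin 3 × Fin n) :=
  Finset.univ.map ⟨fun k => .inr (k, i), fun a b h => by simpa using h⟩

def hubs (n : ℕ) : Finset (Fin 3 ⊕ Fin 3 × Fin n) :=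
  Finset.univ.map .inl

theorem card_triangle (n : ℕ) (i : Fin n) : (triangle n i).card = 3 := by
  simp [triangle]

theorem card_hubs (n : ℕ) : (hubs n).card = 3 := by
  simp [hubs]

theorem pairwise_disjoint_triangle (n : ℕ) : Pairwise (Disjoint on triangle n) := by
  intro i j hij
  simp only [onFun, triangle, Finset.disjoint_left, Finset.mem_map, Finset.mem_univ,
    true_and, not_exists]
  rintro _ ⟨k, rfl⟩ k' h
  exact hij (Prod.ext_iff.1 (Sum.inr_injective h)).2.symm

theorem mem_hubs_of_adj {n : ℕ} {i : Fin n} {v w : Fin 3 ⊕ Fin 3 × Fin n}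
    (hv : v ∈ triangle n i) (hw : w ∉ triangle n i) (hvw : (GGraph n).Adj v w) :
    w ∈ hubs n := by
  simp only [triangle, Finset.mem_map, Finset.mem_univ, true_and] at hv hw
  obtain ⟨k, rfl⟩ := hv
  rcases w with k' | ⟨k', j⟩
  · simp [hubs]
  · obtain ⟨rfl, -⟩ : i = j ∧ k ≠ k' := hvw
    exact absurd ⟨k', rfl⟩ hw

end GGraph

/-- `G_{2r+1}` has `6r + 6` vertices and no perfect matching. -/
theorem stmt_7 (r : ℕ) (hr : 3 ≤ r) :
    Fintype.card (Fin 3 ⊕ Fin 3 × Fin (2 * r + 1)) = 6 * r + 6 ∧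
    ¬ ∃ M : (GGraph (2 * r + 1)).Subgraph, M.IsPerfectMatching := by
  refine ⟨by simp only [Fintype.card_sum, Fintype.card_prod, Fintype.card_fin]; ring, ?_⟩
  rintro ⟨M, hM⟩
  have hcard := SimpleGraph.Subgraph.IsPerfectMatching.card_le_card_of_odd_blocks hM
    (GGraph.triangle _)
    (fun i => by rw [GGraph.card_triangle]; decide) (GGraph.pairwise_disjoint_triangle _)
    (GGraph.hubs _) (fun _ _ hv _ hw hvw => GGraph.mem_hubs_of_adj hv hw hvw)
  rw [Fintype.card_fin, GGraph.card_hubs] at hcard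
  omega
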